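/- arXiv:2110.12690 — 3 statements merged into one kernel-verified Lean document; each statement's English description precedes it below -/
import Mathlib

section
/- Let F : ℝᵈ → ℝᵈ be twice continuously differentiable such that the Jacobian ∇F(x) is skew-symmetric for every x. Then F is affine: there exists a skew-symmetric matrix A and a vector b such that F(x) = A x + b for all x. -/
/-!
Differentiating the skew-symmetry of `DF` shows that each `D²F(x) u` is skew-symmetric, while
`D²F(x)` is symmetric in its two arguments. A trilinear form that is symmetric in its first two
slots and antisymmetric in its last two vanishes, so `D²F = 0`, `DF` is constant and `F` is affine.
-/

open scoped RealInnerProductSpace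

section

variable {E : Type*} [NormedAddCommGroup E] [InnerProductSpace ℝ E]

theorem ContinuousLinearMap.eq_zero_of_symm_of_inner_skew {S : E →L[ℝ] E →L[ℝ] E}
    (hsymm : ∀ u v, S u v = S v u) (hskew : ∀ u v w, ⟪S u v, w⟫ = -⟪v, S u w⟫) : S = 0 := by
  set T : E → E → E → ℝ := fun u v w => ⟪S u v, w⟫
  have hT₁₂ : ∀ u v w, T u v w = T v u w := fun u v w => by simp only [T, hsymm u v]
  have hT₂₃ : ∀ u v w, T u v w = -T u w v := fun u v w => by
    simp only [T, hskew u v w, real_inner_comm v]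
  have hT : ∀ u v w, T u v w = 0 := fun u v w => by
    have : T u v w = -T u v w := by
      calc T u v w = T v u w := hT₁₂ ..
        _ = -T v w u := hT₂₃ ..
        _ = -T w v u := by rw [hT₁₂]
        _ = T w u v := by rw [hT₂₃, neg_neg]
        _ = T u w v := hT₁₂ ..
        _ = -T u v w := hT₂₃ ..
    linarith
  ext u v : 2
  exact inner_self_eq_zero.mp (hT u v (S u v))

theorem inner_fderiv_apply_eq_neg_of_forall_inner_skew {B : E → E →L[ℝ] E} {x : E}
    (hB : DifferentiableAt ℝ B x) (hskew : ∀ y v w, ⟪B y v, w⟫ = -⟪v, B y w⟫) (u v w : E) :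
    ⟪fderiv ℝ B x u v, w⟫ = -⟪v, fderiv ℝ B x u w⟫ := by
  set L : (E →L[ℝ] E) →L[ℝ] ℝ :=
    (innerSL ℝ w).comp (ContinuousLinearMap.apply ℝ E v) +
      (innerSL ℝ v).comp (ContinuousLinearMap.apply ℝ E w)
  have hL : ∀ T : E →L[ℝ] E, L T = ⟪T v, w⟫ + ⟪v, T w⟫ := fun T => by
    simp only [L, add_apply, ContinuousLinearMap.comp_apply,
      ContinuousLinearMap.apply_apply, innerSL_apply_apply, real_inner_comm w]
  have hLB : HasFDerivAt (fun y => L (B y)) (L.comp (fderiv ℝ B x)) x :=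
    L.hasFDerivAt.comp x hB.hasFDerivAt
  have hLB_zero : (fun y => L (B y)) = fun _ => 0 := funext fun y => by
    rw [hL, hskew, neg_add_cancel]
  rw [hLB_zero] at hLB
  have := congrArg (· u) ((hasFDerivAt_const (0 : ℝ) x).unique hLB)
  simp only [zero_apply, ContinuousLinearMap.comp_apply, hL] at this
  linarith

end

theorem exists_eq_add_of_fderiv_fderiv_eq_zero {𝕜 E F : Type*} [RCLike 𝕜]
    [NormedAddCommGroup E] [NormedSpace 𝕜 E] [NormedAddCommGroup F] [NormedSpace 𝕜 F]
    {f : E → F} (hf : Differentiable 𝕜 f) (hf' : Differentiable 𝕜 (fderiv 𝕜 f))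
    (h : ∀ x, fderiv 𝕜 (fderiv 𝕜 f) x = 0) : ∃ b, ∀ x, f x = fderiv 𝕜 f 0 x + b := by
  have hconst : ∀ x, fderiv 𝕜 f x = fderiv 𝕜 f 0 := fun x => is_const_of_fderiv_eq_zero hf' h x 0
  have hfeq := eq_of_fderiv_eq hf ((fderiv 𝕜 f 0).differentiable.add_const (f 0))
    (fun x => by rw [hconst, fderiv_add_const, ContinuousLinearMap.fderiv]) 0 (by simp)
  exact ⟨f 0, fun x => congrFun hfeq x⟩

/-- A C² map whose Jacobian is everywhere skew-symmetric is affine with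
skew-symmetric linear part. -/
theorem stmt_3 (d : ℕ) (F : EuclideanSpace ℝ (Fin d) → EuclideanSpace ℝ (Fin d))
    (hF : ContDiff ℝ 2 F)
    (hskew : ∀ x v w, ⟪fderiv ℝ F x v, w⟫ = - ⟪v, fderiv ℝ F x w⟫) :
    ∃ A : EuclideanSpace ℝ (Fin d) →L[ℝ] EuclideanSpace ℝ (Fin d),
      (∀ v w, ⟪A v, w⟫ = - ⟪v, A w⟫) ∧
      ∃ b : EuclideanSpace ℝ (Fin d), ∀ x, F x = A x + b := by
  have hDF : Differentiable ℝ (fderiv ℝ F) :=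
    (hF.fderiv_right (m := 1) le_rfl).differentiable one_ne_zero
  have hD2F : ∀ x, fderiv ℝ (fderiv ℝ F) x = 0 := fun x =>
    ContinuousLinearMap.eq_zero_of_symm_of_inner_skew
      (hF.contDiffAt.isSymmSndFDerivAt (by simp))
      (inner_fderiv_apply_eq_neg_of_forall_inner_skew (hDF x) hskew)
  exact ⟨fderiv ℝ F 0, hskew 0,
    exists_eq_add_of_fderiv_fderiv_eq_zero (hF.differentiable two_ne_zero) hDF hD2F⟩
end

section
/- Let f : ℝᵈ → ℝ be a convex differentiable function whose gradient is Lipschitz with constant L. Then for all x, z ∈ ℝᵈ: (1/L)‖∇f(x) - ∇f(z)‖₂² ≤ ⟨x - z, ∇f(x) - ∇f(z)⟩ (co-coercivity of the gradient). -/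
/-!
Convexity gives the first-order lower bound `f x + ⟪∇f x, y - x⟫ ≤ f y`, and the Lipschitz
gradient gives the quadratic upper bound `f y ≤ f x + ⟪∇f x, y - x⟫ + L/2 ‖y - x‖²`.
Chaining the two through the gradient step `z - L⁻¹ (∇f z - ∇f x)` sharpens the lower bound by
`‖∇f z - ∇f x‖² / (2L)`; adding this sharpened bound for `(x, z)` and for `(z, x)` gives
co-coercivity.
-/

open scoped RealInnerProductSpace

open Set

section

variable {E : Type*} [NormedAddCommGroup E] [InnerProductSpace ℝ E] [CompleteSpace E]
  {f : E → ℝ}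

theorem hasDerivAt_comp_add_smul {x v : E} {t : ℝ} (hf : DifferentiableAt ℝ f (x + t • v)) :
    HasDerivAt (fun s : ℝ => f (x + s • v)) ⟪gradient f (x + t • v), v⟫ t := by
  have hline : HasDerivAt (fun s : ℝ => x + s • v) v t := by
    simpa using ((hasDerivAt_id t).smul_const v).const_add x
  have := hf.hasGradientAt.hasFDerivAt.comp_hasDerivAt t hline
  rwa [InnerProductSpace.toDual_apply_apply] at this

theorem ConvexOn.add_inner_gradient_le (hconv : ConvexOn ℝ univ f) {x : E}
    (hf : DifferentiableAt ℝ f x) (y : E) :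
    f x + ⟪gradient f x, y - x⟫ ≤ f y := by
  have hline : ConvexOn ℝ univ (fun s : ℝ => f (x + s • (y - x))) := by
    simpa [Function.comp_def, AffineMap.lineMap_apply, add_comm] using
      hconv.comp_affineMap (AffineMap.lineMap x y : ℝ →ᵃ[ℝ] E)
  have hderiv := hasDerivAt_comp_add_smul (t := 0) (v := y - x) (by rwa [zero_smul, add_zero])
  rw [zero_smul, add_zero] at hderiv
  have := hline.le_slope_of_hasDerivAt (mem_univ 0) (mem_univ 1) zero_lt_one hderiv
  simp only [slope_def_field, zero_smul, add_zero, one_smul, add_sub_cancel, sub_zero,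
    div_one] at this
  linarith

theorem le_add_inner_gradient_add_sq {L : ℝ} (hdiff : Differentiable ℝ f)
    (hsmooth : ∀ x z, ‖gradient f x - gradient f z‖ ≤ L * ‖x - z‖) (x y : E) :
    f y ≤ f x + ⟪gradient f x, y - x⟫ + L / 2 * ‖y - x‖ ^ 2 := by
  set v := y - x
  have hφ : ∀ t : ℝ, HasDerivAt (fun t => f (x + t • v) - f x - t * ⟪gradient f x, v⟫)
      ⟪gradient f (x + t • v) - gradient f x, v⟫ t := fun t => by
    rw [inner_sub_left]
    exact ((hasDerivAt_comp_add_smul (hdiff _)).sub_const (f x)).sub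
      (hasDerivAt_mul_const ⟪gradient f x, v⟫)
  have hB : ∀ t : ℝ, HasDerivAt (fun t => L / 2 * ‖v‖ ^ 2 * t ^ 2) (L * ‖v‖ ^ 2 * t) t :=
    fun t => ((hasDerivAt_pow 2 t).const_mul _).congr_deriv (by push_cast; ring)
  have bound : ∀ t ∈ Ico (0 : ℝ) 1,
      ⟪gradient f (x + t • v) - gradient f x, v⟫ ≤ L * ‖v‖ ^ 2 * t := fun t ht =>
    calc ⟪gradient f (x + t • v) - gradient f x, v⟫
        ≤ ‖gradient f (x + t • v) - gradient f x‖ * ‖v‖ := real_inner_le_norm _ _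
      _ ≤ L * ‖t • v‖ * ‖v‖ := by
        gcongr
        simpa using hsmooth (x + t • v) x
      _ = L * ‖v‖ ^ 2 * t := by rw [norm_smul, Real.norm_of_nonneg ht.1]; ring
  have := image_le_of_deriv_right_le_deriv_boundary
    (fun t _ => (hφ t).continuousAt.continuousWithinAt)
    (fun t _ => (hφ t).hasDerivWithinAt) (by simp)
    (fun t _ => (hB t).continuousAt.continuousWithinAt)
    (fun t _ => (hB t).hasDerivWithinAt) bound (right_mem_Icc.2 zero_le_one)
  simp only [one_smul, add_sub_cancel, one_mul, one_pow, mul_one, v] at this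
  linarith

theorem ConvexOn.add_inner_gradient_add_sq_le {L : ℝ} (hconv : ConvexOn ℝ univ f)
    (hdiff : Differentiable ℝ f) (hL : 0 < L)
    (hsmooth : ∀ x z, ‖gradient f x - gradient f z‖ ≤ L * ‖x - z‖) (x z : E) :
    f x + ⟪gradient f x, z - x⟫ + 1 / (2 * L) * ‖gradient f z - gradient f x‖ ^ 2 ≤ f z := by
  set g := gradient f z - gradient f x
  have h1 := hconv.add_inner_gradient_le (hdiff x) (z - L⁻¹ • g)
  have h2 := le_add_inner_gradient_add_sq hdiff hsmooth z (z - L⁻¹ • g)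
  rw [show z - L⁻¹ • g - x = (z - x) - L⁻¹ • g by abel, inner_sub_right,
    real_inner_smul_right] at h1
  rw [sub_sub_cancel_left, inner_neg_right, real_inner_smul_right, norm_neg, norm_smul,
    Real.norm_of_nonneg (inv_nonneg.2 hL.le)] at h2
  have hg : ⟪gradient f z, g⟫ - ⟪gradient f x, g⟫ = ‖g‖ ^ 2 := by
    rw [← inner_sub_left, real_inner_self_eq_norm_sq]
  have hL' : L / 2 * (L⁻¹ * ‖g‖) ^ 2 = 1 / (2 * L) * ‖g‖ ^ 2 := by
    field_simp
  linear_combination h1 + h2 - L⁻¹ * hg + hL'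

theorem ConvexOn.one_div_mul_norm_gradient_sub_sq_le_inner {L : ℝ} (hconv : ConvexOn ℝ univ f)
    (hdiff : Differentiable ℝ f) (hL : 0 < L)
    (hsmooth : ∀ x z, ‖gradient f x - gradient f z‖ ≤ L * ‖x - z‖) (x z : E) :
    1 / L * ‖gradient f x - gradient f z‖ ^ 2 ≤ ⟪x - z, gradient f x - gradient f z⟫ := by
  have hxz := hconv.add_inner_gradient_add_sq_le hdiff hL hsmooth x z
  have hzx := hconv.add_inner_gradient_add_sq_le hdiff hL hsmooth z x
  have hinner : ⟪gradient f x, z - x⟫ + ⟪gradient f z, x - z⟫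
      = -⟪x - z, gradient f x - gradient f z⟫ := by
    simp only [inner_sub_left, inner_sub_right, real_inner_comm x, real_inner_comm z]
    ring
  have hhalf : 1 / (2 * L) + 1 / (2 * L) = 1 / L := by field_simp; ring
  rw [norm_sub_rev] at hxz
  linear_combination hxz + hzx - hinner + ‖gradient f x - gradient f z‖ ^ 2 * hhalf

end

/-- Co-coercivity of the gradient of a convex `L`-smooth function. -/
theorem stmt_5 (d : ℕ) (f : EuclideanSpace ℝ (Fin d) → ℝ) (L : ℝ)
    (hconv : ConvexOn ℝ Set.univ f) (hdiff : Differentiable ℝ f)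
    (hsmooth : ∀ x z, ‖gradient f x - gradient f z‖ ≤ L * ‖x - z‖) :
    ∀ x z : EuclideanSpace ℝ (Fin d),
      (1 / L) * ‖gradient f x - gradient f z‖ ^ 2 ≤
        ⟪x - z, gradient f x - gradient f z⟫ := by
  intro x z
  rcases le_or_gt L 0 with hL | hL
  · have hconst : gradient f x = gradient f z := by
      rw [← sub_eq_zero, ← norm_le_zero_iff]
      exact (hsmooth x z).trans (mul_nonpos_of_nonpos_of_nonneg hL (norm_nonneg _))
    simp [hconst]
  · exact hconv.one_div_mul_norm_gradient_sub_sq_le_inner hdiff hL hsmooth x z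
end

section
/- Let W ∈ ℝ^{k×d}, b ∈ ℝᵏ, and σ : ℝ → ℝ non-decreasing and 1-Lipschitz (applied entrywise). Then the Convex Potential Layer map x ↦ x - (2/‖W‖₂²) Wᵀσ(Wx + b) is 1-Lipschitz with respect to the Euclidean norm (assuming W ≠ 0). -/
open Matrix

/-!
The layer is `x ↦ x - h • A† g (A x)` with `A = W`, `g u = σ (u + b)` coordinatewise and
`h = 2 / ‖A‖²`. A monotone `1`-Lipschitz `σ` makes `g` firmly nonexpansive,
`‖g u - g v‖² ≤ ⟪g u - g v, u - v⟫`. With `w = g (A x) - g (A z)`, the squared distance of the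
images of `x` and `z` expands to at most `‖x - z‖² - h (2 - h ‖A‖²) ‖w‖²`, and `h ‖A‖² ≤ 2`.
-/

open scoped InnerProductSpace

def FirmlyNonexpansive {F : Type*} [NormedAddCommGroup F] [InnerProductSpace ℝ F]
    (g : F → F) : Prop :=
  ∀ u v, ‖g u - g v‖ ^ 2 ≤ ⟪g u - g v, u - v⟫_ℝ

theorem Monotone.sq_sub_le_mul_sub {σ : ℝ → ℝ} (hmono : Monotone σ) (hσ : LipschitzWith 1 σ)
    (p q : ℝ) : (σ p - σ q) ^ 2 ≤ (σ p - σ q) * (p - q) := by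
  have hlip : |σ p - σ q| ≤ |p - q| := by
    simpa [Real.dist_eq] using hσ.dist_le_mul p q
  have hsign : 0 ≤ (σ p - σ q) * (p - q) := by
    rcases le_total q p with hqp | hpq
    · exact mul_nonneg (sub_nonneg.2 (hmono hqp)) (sub_nonneg.2 hqp)
    · exact mul_nonneg_of_nonpos_of_nonpos (sub_nonpos.2 (hmono hpq)) (sub_nonpos.2 hpq)
  calc (σ p - σ q) ^ 2 = |σ p - σ q| * |σ p - σ q| := by rw [sq, abs_mul_abs_self]
    _ ≤ |σ p - σ q| * |p - q| := by gcongr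
    _ = (σ p - σ q) * (p - q) := by rw [← abs_mul, abs_of_nonneg hsign]

theorem Monotone.firmlyNonexpansive_euclidean {ι : Type*} [Fintype ι] {σ : ℝ → ℝ}
    (hmono : Monotone σ) (hσ : LipschitzWith 1 σ) (b : ι → ℝ) :
    FirmlyNonexpansive fun u : EuclideanSpace ℝ ι => WithLp.toLp 2 fun i => σ (u i + b i) := by
  intro u v
  rw [EuclideanSpace.norm_sq_eq, PiLp.inner_apply]
  refine Finset.sum_le_sum fun i _ => ?_
  simpa [Real.norm_eq_abs, sq_abs, mul_comm] using hmono.sq_sub_le_mul_sub hσ (u i + b i) (v i + b i)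

section GradientStep

variable {E F : Type*} [NormedAddCommGroup E] [InnerProductSpace ℝ E] [CompleteSpace E]
  [NormedAddCommGroup F] [InnerProductSpace ℝ F] [CompleteSpace F]

theorem FirmlyNonexpansive.lipschitzWith_sub_smul_adjoint {g : F → F} (hg : FirmlyNonexpansive g)
    (A : E →L[ℝ] F) {h : ℝ} (h0 : 0 ≤ h) (hA : h * ‖A‖ ^ 2 ≤ 2) :
    LipschitzWith 1 fun x => x - h • A.adjoint (g (A x)) := by
  refine LipschitzWith.of_dist_le_mul fun x z => ?_
  rw [NNReal.coe_one, one_mul, dist_eq_norm, dist_eq_norm]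
  set w := g (A x) - g (A z)
  have hdiff : x - h • A.adjoint (g (A x)) - (z - h • A.adjoint (g (A z)))
      = (x - z) - h • A.adjoint w := by
    rw [map_sub, smul_sub]; abel
  have hfirm : ‖w‖ ^ 2 ≤ ⟪x - z, A.adjoint w⟫_ℝ := by
    rw [ContinuousLinearMap.adjoint_inner_right, map_sub, real_inner_comm]
    exact hg _ _
  have hadj : ‖A.adjoint w‖ ≤ ‖A‖ * ‖w‖ := by
    simpa [LinearIsometryEquiv.norm_map] using A.adjoint.le_opNorm w
  have hsq : ‖(x - z) - h • A.adjoint w‖ ^ 2 ≤ ‖x - z‖ ^ 2 :=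
    calc ‖(x - z) - h • A.adjoint w‖ ^ 2
        = ‖x - z‖ ^ 2 - 2 * h * ⟪x - z, A.adjoint w⟫_ℝ + h ^ 2 * ‖A.adjoint w‖ ^ 2 := by
          rw [norm_sub_sq_real, real_inner_smul_right, norm_smul, Real.norm_of_nonneg h0]; ring
      _ ≤ ‖x - z‖ ^ 2 - 2 * h * ‖w‖ ^ 2 + h ^ 2 * (‖A‖ * ‖w‖) ^ 2 := by gcongr
      _ = ‖x - z‖ ^ 2 - h * (2 - h * ‖A‖ ^ 2) * ‖w‖ ^ 2 := by ring
      _ ≤ ‖x - z‖ ^ 2 := by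
          have hgap : 0 ≤ 2 - h * ‖A‖ ^ 2 := sub_nonneg.2 hA
          have hdecrease : 0 ≤ h * (2 - h * ‖A‖ ^ 2) * ‖w‖ ^ 2 := by positivity
          linarith
  rw [hdiff]
  exact le_of_pow_le_pow_left₀ two_ne_zero (norm_nonneg _) hsq

end GradientStep

theorem Matrix.toEuclideanLin_transpose_eq_adjoint {m n : Type*} [Fintype m] [Fintype n]
    [DecidableEq m] [DecidableEq n] (W : Matrix m n ℝ) :
    ⇑(toEuclideanLin Wᵀ) = ⇑(LinearMap.toContinuousLinearMap (toEuclideanLin W)).adjoint := by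
  rw [← conjTranspose_eq_transpose_of_trivial, toEuclideanLin_conjTranspose_eq_adjoint,
    LinearMap.adjoint_eq_toCLM_adjoint]
  rfl

theorem div_sq_mul_sq_le {a : ℝ} (ha : 0 ≤ a) (b : ℝ) : a / b ^ 2 * b ^ 2 ≤ a := by
  rcases eq_or_ne b 0 with rfl | hb
  · simpa using ha
  · rw [div_mul_cancel₀ a (pow_ne_zero 2 hb)]

theorem stmt_14_general (d k : ℕ) (W : Matrix (Fin k) (Fin d) ℝ)
    (b : Fin k → ℝ) (σ : ℝ → ℝ) (hmono : Monotone σ) (hσ : LipschitzWith 1 σ) :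
    ∀ x z : EuclideanSpace ℝ (Fin d),
      ‖(x - (2 / ‖LinearMap.toContinuousLinearMap (Matrix.toEuclideanLin W)‖ ^ 2) •
            Matrix.toEuclideanLin Wᵀ (WithLp.toLp 2 (fun i => σ (Matrix.toEuclideanLin W x i + b i)))) -
        (z - (2 / ‖LinearMap.toContinuousLinearMap (Matrix.toEuclideanLin W)‖ ^ 2) •
            Matrix.toEuclideanLin Wᵀ (WithLp.toLp 2 (fun i => σ (Matrix.toEuclideanLin W z i + b i))))‖ ≤
      ‖x - z‖ := by
  intro x z
  rw [toEuclideanLin_transpose_eq_adjoint]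
  have hlip := (hmono.firmlyNonexpansive_euclidean hσ b).lipschitzWith_sub_smul_adjoint
    (LinearMap.toContinuousLinearMap (toEuclideanLin W)) (by positivity)
    (div_sq_mul_sq_le zero_le_two _)
  simpa using hlip.norm_sub_le x z

/-- The Convex Potential Layer is `1`-Lipschitz. -/
theorem stmt_14 (d k : ℕ) (W : Matrix (Fin k) (Fin d) ℝ) (hW : W ≠ 0)
    (b : Fin k → ℝ) (σ : ℝ → ℝ) (hmono : Monotone σ) (hσ : LipschitzWith 1 σ) :
    ∀ x z : EuclideanSpace ℝ (Fin d),
      ‖(x - (2 / ‖LinearMap.toContinuousLinearMap (Matrix.toEuclideanLin W)‖ ^ 2) •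
            Matrix.toEuclideanLin Wᵀ (WithLp.toLp 2 (fun i => σ (Matrix.toEuclideanLin W x i + b i)))) -
        (z - (2 / ‖LinearMap.toContinuousLinearMap (Matrix.toEuclideanLin W)‖ ^ 2) •
            Matrix.toEuclideanLin Wᵀ (WithLp.toLp 2 (fun i => σ (Matrix.toEuclideanLin W z i + b i))))‖ ≤
      ‖x - z‖ :=
  stmt_14_general d k W b σ hmono hσ
end
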